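/- arXiv:2206.07610 — 2 statements merged into one kernel-verified Lean document; each statement's English description precedes it below -/
import Mathlib

section
/- Let G be a set equipped with two group structures (G,·) and (G,∘) having the same identity element. Then (G,·,∘) is a skew brace if and only if the subgroup λ·(G) of the permutation group Perm(G) is normalised by λ∘(G) (i.e., λ∘(σ) λ·(G) λ∘(σ)⁻¹ = λ·(G) for all σ ∈ G). -/
/-!
Read as an identity of permutations, the brace identity says exactly that
`λ∘(σ) λ·(τ) λ∘(σ)⁻¹ = λ·((σ ∘ τ) · σ⁻¹)`; as `τ ↦ (σ ∘ τ) · σ⁻¹` is a bijection of `G`,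
this is normalisation. Conversely, if the conjugate is some `λ·(ρ)`, evaluating both sides at
`σ = λ∘(σ)(1)` (here the common identity is needed) forces `ρ = (σ ∘ τ) · σ⁻¹`.
-/

def IsSkewBrace {G : Type*} (dot circ : Group G) : Prop :=
  ∀ σ τ κ : G,
    circ.mul σ (dot.mul τ κ) =
      dot.mul (dot.mul (circ.mul σ τ) (dot.inv σ)) (circ.mul σ κ)

def gammaFun {G : Type*} (dot circ : Group G) (σ τ : G) : G :=
  dot.mul (dot.inv σ) (circ.mul σ τ)

def IsSubgroupOf {G : Type*} (S : Group G) (H : Set G) : Prop :=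
  S.one ∈ H ∧ (∀ a ∈ H, ∀ b ∈ H, S.mul a b ∈ H) ∧ (∀ a ∈ H, S.inv a ∈ H)

def IsLeftIdeal {G : Type*} (dot circ : Group G) (H : Set G) : Prop :=
  IsSubgroupOf dot H ∧ ∀ σ : G, ∀ τ ∈ H, gammaFun dot circ σ τ ∈ H

def IsStrongLeftIdeal {G : Type*} (dot circ : Group G) (H : Set G) : Prop :=
  IsLeftIdeal dot circ H ∧
    ∀ σ : G, ∀ τ ∈ H, dot.mul (dot.mul σ τ) (dot.inv σ) ∈ H

def IsCharacteristicSubgroupOf {G : Type*} (S : Group G) (H : Set G) : Prop :=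
  IsSubgroupOf S H ∧
    ∀ f : G ≃ G, (∀ a b : G, f (S.mul a b) = S.mul (f a) (f b)) → ∀ a ∈ H, f a ∈ H

def oppGroup {G : Type*} (dot : Group G) : Group G :=
  letI := dot
  { mul := fun a b => b * a
    one := (1 : G)
    inv := fun a => a⁻¹
    div := fun a b => b⁻¹ * a
    div_eq_mul_inv := fun _ _ => rfl
    mul_assoc := fun a b c => (mul_assoc c b a).symm
    one_mul := fun a => mul_one a
    mul_one := fun a => one_mul a
    inv_mul_cancel := fun a => mul_inv_cancel a
    npow := @npowRec G ⟨(1 : G)⟩ ⟨fun a b => b * a⟩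
    npow_zero := fun _ => rfl
    npow_succ := fun _ _ => rfl
    zpow := @zpowRec G ⟨(1 : G)⟩ ⟨fun a b => b * a⟩ ⟨fun a => a⁻¹⟩
      (@npowRec G ⟨(1 : G)⟩ ⟨fun a b => b * a⟩)
    zpow_zero' := fun _ => rfl
    zpow_succ' := fun _ _ => rfl
    zpow_neg' := fun _ _ => rfl }

def lam {G : Type*} (S : Group G) (σ : G) : Equiv.Perm G :=
  letI := S; Equiv.mulLeft σ

def rho {G : Type*} (S : Group G) (σ : G) : Equiv.Perm G :=
  letI := S; Equiv.mulRight σ⁻¹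


section LeftRegular

variable {G : Type*} (dot circ : Group G)

-- `rho dot σ (lam circ σ τ)` is `(σ ∘ τ) · σ⁻¹`.
theorem isSkewBrace_iff_conj_lam_eq :
    IsSkewBrace dot circ ↔ ∀ σ τ : G,
      lam circ σ * lam dot τ * (lam circ σ)⁻¹ = lam dot (rho dot σ (lam circ σ τ)) := by
  simp only [mul_inv_eq_iff_eq_mul]
  exact forall₂_congr fun _ _ => by rw [Equiv.Perm.ext_iff]; rfl

variable {dot circ}

theorem eq_rho_lam_of_lam_eq_conj (hone : dot.one = circ.one) {σ τ ρ : G}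
    (h : lam dot ρ = lam circ σ * lam dot τ * (lam circ σ)⁻¹) :
    ρ = rho dot σ (lam circ σ τ) := by
  have hσ : (lam circ σ)⁻¹ σ = dot.one := by
    rw [Equiv.Perm.inv_eq_iff_eq, hone]
    exact (circ.mul_one σ).symm
  have hρσ : dot.mul ρ σ = circ.mul σ τ := by
    have := congrArg (· σ) h
    simp only [Equiv.Perm.mul_apply, hσ] at this
    exact this.trans (congrArg (circ.mul σ) (dot.mul_one τ))
  let _ := dot
  exact eq_mul_inv_of_mul_eq hρσ

end LeftRegular

/-- For two group structures on `G` with the same identity,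
`(G,·,∘)` is a skew brace iff `λ·(G)` is normalised by `λ∘(G)` in `Perm G`. -/
theorem stmt0 {G : Type*} (dot circ : Group G) (hone : dot.one = circ.one) :
    IsSkewBrace dot circ ↔
      ∀ σ : G,
        (fun π : Equiv.Perm G => lam circ σ * π * (lam circ σ)⁻¹) '' Set.range (lam dot)
          = Set.range (lam dot) := by
  rw [isSkewBrace_iff_conj_lam_eq]
  constructor
  · intro h σ
    have hconj : (fun π => lam circ σ * π * (lam circ σ)⁻¹) ∘ lam dot =
        lam dot ∘ (rho dot σ * lam circ σ) := funext (h σ)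
    rw [← Set.range_comp, hconj]
    exact (rho dot σ * lam circ σ).surjective.range_comp _
  · intro h σ τ
    obtain ⟨ρ, hρ⟩ : lam circ σ * lam dot τ * (lam circ σ)⁻¹ ∈ Set.range (lam dot) :=
      h σ ▸ Set.mem_image_of_mem _ (Set.mem_range_self τ)
    rw [← hρ, eq_rho_lam_of_lam_eq_conj hone hρ]
end

section
/- Let (G,·,∘) be a skew brace with gamma function γ, and define the opposite operation σ ·op τ = τ·σ. Then (G,·op,∘) is a skew brace, and its gamma function γ' is given by γ'(σ) = ι·(σ)∘γ(σ), that is, γ'(σ)(τ) = σ·(γ(σ)(τ))·σ⁻¹ for all σ, τ ∈ G. -/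
theorem IsSkewBrace.opp {G : Type*} {dot circ : Group G} (h : IsSkewBrace dot circ) :
    IsSkewBrace (oppGroup dot) circ := by
  let _ := dot
  intro σ τ κ
  show circ.mul σ (κ * τ) = circ.mul σ κ * (σ⁻¹ * circ.mul σ τ)
  exact (h σ κ τ).trans (mul_assoc _ _ _)

theorem gammaFun_oppGroup {G : Type*} (dot circ : Group G) (σ τ : G) :
    gammaFun (oppGroup dot) circ σ τ =
      dot.mul (dot.mul σ (gammaFun dot circ σ τ)) (dot.inv σ) := by
  let _ := dot
  show circ.mul σ τ * σ⁻¹ = σ * (σ⁻¹ * circ.mul σ τ) * σ⁻¹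
  rw [mul_inv_cancel_left]

/-- If `(G,·,∘)` is a skew brace, then so is `(G,·op,∘)`, and its gamma
function is `γ'(σ)(τ) = σ·(γ(σ)(τ))·σ⁻¹`. -/
theorem stmt5 {G : Type*} (dot circ : Group G) (h : IsSkewBrace dot circ) :
    IsSkewBrace (oppGroup dot) circ ∧
      ∀ σ τ : G, gammaFun (oppGroup dot) circ σ τ =
        dot.mul (dot.mul σ (gammaFun dot circ σ τ)) (dot.inv σ) :=
  ⟨h.opp, gammaFun_oppGroup dot circ⟩
end
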